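/- arXiv:1203.3563 — 2 statements merged into one kernel-verified Lean document; each statement's English description precedes it below -/
import Mathlib

section
/- Let n ≥ 2, let u ∈ ℝⁿ be unit timelike, and let v ∈ ℝⁿ. Then v is minimal with respect to u if and only if uᵀηv = 0 or v is a scalar multiple of u (i.e., v is either purely spatial or purely temporal relative to u). -/
open Matrix

noncomputable section

/-- The Minkowski metric `η = diag(-1, 1, …, 1)` on `ℝⁿ`. -/
def eta (n : ℕ) : Matrix (Fin n) (Fin n) ℝ :=
  Matrix.diagonal fun i => if i.val = 0 then (-1 : ℝ) else 1

/-- The Lorentz group `O(1,n-1)`: matrices with `Λᵀ η Λ = η`. -/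
def IsLorentz {n : ℕ} (Λ : Matrix (Fin n) (Fin n) ℝ) : Prop :=
  Λᵀ * eta n * Λ = eta n

/-- The squared Euclidean norm of a vector `v` associated with the unit timelike
vector `u`: `‖v‖_u² = vᵀ (η + 2(ηu)(ηu)ᵀ) v`. -/
def vecNormSq {n : ℕ} (u v : Fin n → ℝ) : ℝ :=
  v ⬝ᵥ ((eta n + (2 : ℝ) • vecMulVec ((eta n).mulVec u) ((eta n).mulVec u)).mulVec v)

/-- The Euclidean norm `‖v‖_u` associated with `u`. -/
def vecNorm {n : ℕ} (u v : Fin n → ℝ) : ℝ :=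
  Real.sqrt (vecNormSq u v)

/-- `v` is minimal with respect to `u` if `‖Λv‖_u ≥ ‖v‖_u` for every Lorentz `Λ`. -/
def IsMinimalVec {n : ℕ} (u v : Fin n → ℝ) : Prop :=
  ∀ Λ : Matrix (Fin n) (Fin n) ℝ, IsLorentz Λ → vecNorm u v ≤ vecNorm u (Λ.mulVec v)

namespace StmtAux

variable {n : ℕ}

lemma etaVec_dot (u x : Fin n → ℝ) : ((eta n) *ᵥ u) ⬝ᵥ x = u ⬝ᵥ ((eta n) *ᵥ x) := by
  simp only [dotProduct, eta, mulVec_diagonal]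
  exact Finset.sum_congr rfl fun i _ => by ring

lemma md_comm (x y : Fin n → ℝ) : x ⬝ᵥ ((eta n) *ᵥ y) = y ⬝ᵥ ((eta n) *ᵥ x) := by
  rw [← etaVec_dot, dotProduct_comm]

lemma vmv_mulVec (a b x : Fin n → ℝ) : (vecMulVec a b) *ᵥ x = (b ⬝ᵥ x) • a := by
  ext i
  simp only [mulVec, vecMulVec_apply, dotProduct, Pi.smul_apply, smul_eq_mul, Finset.sum_mul]
  exact Finset.sum_congr rfl fun j _ => by ring

lemma vecNormSq_eq (u w : Fin n → ℝ) :
    vecNormSq u w = w ⬝ᵥ (eta n) *ᵥ w + 2 * (u ⬝ᵥ (eta n) *ᵥ w)^2 := by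
  rw [vecNormSq, add_mulVec, smul_mulVec, vmv_mulVec, dotProduct_add, dotProduct_smul,
    dotProduct_smul, etaVec_dot, dotProduct_comm w ((eta n) *ᵥ u), etaVec_dot]
  simp only [smul_eq_mul]
  ring

lemma md_matrix (Λ : Matrix (Fin n) (Fin n) ℝ) (x y : Fin n → ℝ) :
    (Λ *ᵥ x) ⬝ᵥ (eta n) *ᵥ (Λ *ᵥ y) = x ⬝ᵥ (Λᵀ * eta n * Λ) *ᵥ y := by
  rw [mulVec_mulVec, dotProduct_mulVec, ← vecMul_transpose, vecMul_vecMul, ← mul_assoc,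
    ← dotProduct_mulVec]

lemma lorentz_md {Λ : Matrix (Fin n) (Fin n) ℝ} (hΛ : IsLorentz Λ) (x y : Fin n → ℝ) :
    (Λ *ᵥ x) ⬝ᵥ (eta n) *ᵥ (Λ *ᵥ y) = x ⬝ᵥ (eta n) *ᵥ y := by
  rw [md_matrix, hΛ]

lemma entry_eq (M : Matrix (Fin n) (Fin n) ℝ) (i j : Fin n) :
    Pi.single i 1 ⬝ᵥ M *ᵥ Pi.single j 1 = M i j := by
  simp [mulVec, dotProduct, Pi.single_apply]

lemma isLorentz_of_md {Λ : Matrix (Fin n) (Fin n) ℝ}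
    (h : ∀ x y : Fin n → ℝ, (Λ *ᵥ x) ⬝ᵥ (eta n) *ᵥ (Λ *ᵥ y) = x ⬝ᵥ (eta n) *ᵥ y) :
    IsLorentz Λ := by
  ext i j
  have h2 := h (Pi.single i 1) (Pi.single j 1)
  rwa [md_matrix, entry_eq, entry_eq] at h2

lemma md_split (hn : 0 < n) (x y : Fin n → ℝ) :
    x ⬝ᵥ (eta n) *ᵥ y
      = -(x ⟨0, hn⟩ * y ⟨0, hn⟩) + ∑ i ∈ Finset.univ.erase ⟨0, hn⟩, x i * y i := by
  simp only [dotProduct, eta, mulVec_diagonal]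
  rw [← Finset.sum_erase_add _ _ (Finset.mem_univ (⟨0, hn⟩ : Fin n))]
  have h1 : ∀ i ∈ Finset.univ.erase (⟨0, hn⟩ : Fin n),
      x i * ((if (i : Fin n).val = 0 then (-1:ℝ) else 1) * y i) = x i * y i := by
    intro i hi
    have : i.val ≠ 0 := fun h => (Finset.mem_erase.1 hi).1 (Fin.ext h)
    simp [this]
  rw [Finset.sum_congr rfl h1]
  simp
  ring

lemma orth_nonneg (hn : 0 < n) {u p : Fin n → ℝ} (hu : u ⬝ᵥ (eta n) *ᵥ u = -1)
    (hup : u ⬝ᵥ (eta n) *ᵥ p = 0) :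
    0 ≤ p ⬝ᵥ (eta n) *ᵥ p ∧ (p ⬝ᵥ (eta n) *ᵥ p = 0 → p = 0) := by
  set z : Fin n := ⟨0, hn⟩ with hz
  rw [md_split hn] at hu hup
  rw [md_split hn]
  set a := u z
  set b := p z
  set Su := ∑ i ∈ Finset.univ.erase z, u i * u i with hSu
  set Sp := ∑ i ∈ Finset.univ.erase z, p i * p i with hSp
  set Sup := ∑ i ∈ Finset.univ.erase z, u i * p i with hSup
  have hcs : Sup ^ 2 ≤ Su * Sp := by
    have := Finset.sum_mul_sq_le_sq_mul_sq (Finset.univ.erase z) u p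
    simpa [hSu, hSp, hSup, sq] using this
  have hSppos : 0 ≤ Sp := Finset.sum_nonneg fun i _ => mul_self_nonneg _
  have hSupos : 0 ≤ Su := Finset.sum_nonneg fun i _ => mul_self_nonneg _
  have ha : a ^ 2 = 1 + Su := by nlinarith [hu]
  have ha1 : 1 ≤ a ^ 2 := by nlinarith
  have hab : Sup = a * b := by linarith [hup]
  have hcs2 : (a*b)^2 ≤ (a^2 - 1) * Sp := by
    have hSu' : Su = a^2 - 1 := by linarith
    calc (a*b)^2 = Sup^2 := by rw [hab]
      _ ≤ Su * Sp := hcs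
      _ = (a^2 - 1) * Sp := by rw [hSu']
  have key : 0 ≤ -(b * b) + Sp := by nlinarith [hcs2, hSppos, ha1, sq_nonneg b]
  refine ⟨key, fun heq => ?_⟩
  have hb2 : Sp = b * b := by linarith
  have hbsq : b^2 = 0 := by nlinarith [hcs2, hb2, sq_nonneg b, ha1]
  have hb0 : b = 0 := by
    have := sq_eq_zero_iff.1 hbsq
    exact this
  have hSp0 : Sp = 0 := by rw [hb2, hb0]; ring
  have hall : ∀ i ∈ Finset.univ.erase z, p i * p i = 0 := by
    intro i hi
    have := (Finset.sum_eq_zero_iff_of_nonneg (fun i _ => mul_self_nonneg (p i))).1 hSp0 i hi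
    exact this
  funext i
  by_cases hiz : i = z
  · rw [hiz]; exact hb0
  · have := hall i (Finset.mem_erase.2 ⟨hiz, Finset.mem_univ i⟩)
    exact mul_self_eq_zero.1 this


def boost (c σ : ℝ) (u e : Fin n → ℝ) : Matrix (Fin n) (Fin n) ℝ :=
  1 + (c - 1) • vecMulVec e ((eta n) *ᵥ e) - σ • vecMulVec e ((eta n) *ᵥ u)
    + σ • vecMulVec u ((eta n) *ᵥ e) - (c - 1) • vecMulVec u ((eta n) *ᵥ u)

lemma boost_mulVec (c σ : ℝ) (u e x : Fin n → ℝ) :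
    (boost c σ u e) *ᵥ x
      = x + ((c - 1) * (e ⬝ᵥ (eta n) *ᵥ x) - σ * (u ⬝ᵥ (eta n) *ᵥ x)) • e
        + (σ * (e ⬝ᵥ (eta n) *ᵥ x) - (c - 1) * (u ⬝ᵥ (eta n) *ᵥ x)) • u := by
  simp only [boost, add_mulVec, sub_mulVec, smul_mulVec, vmv_mulVec, one_mulVec,
    etaVec_dot]
  funext i
  simp only [Pi.add_apply, Pi.sub_apply, Pi.smul_apply, smul_eq_mul]
  ring

lemma boost_lorentz {c σ : ℝ} {u e : Fin n → ℝ} (hcs : c ^ 2 = 1 + σ ^ 2)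
    (hu : u ⬝ᵥ (eta n) *ᵥ u = -1) (he : e ⬝ᵥ (eta n) *ᵥ e = 1)
    (hue : u ⬝ᵥ (eta n) *ᵥ e = 0) : IsLorentz (boost c σ u e) := by
  have heu : e ⬝ᵥ (eta n) *ᵥ u = 0 := by rw [md_comm]; exact hue
  apply isLorentz_of_md
  intro x y
  rw [boost_mulVec, boost_mulVec]
  simp only [mulVec_add, mulVec_smul, dotProduct_add, dotProduct_smul, add_dotProduct,
    smul_dotProduct, smul_eq_mul]
  rw [md_comm x e, md_comm x u, hu, he, hue, heu]
  linear_combination ((e ⬝ᵥ (eta n) *ᵥ x) * (e ⬝ᵥ (eta n) *ᵥ y)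
    - (u ⬝ᵥ (eta n) *ᵥ x) * (u ⬝ᵥ (eta n) *ᵥ y)) * hcs


lemma md_add_right (x y z : Fin n → ℝ) :
    x ⬝ᵥ (eta n) *ᵥ (y + z) = x ⬝ᵥ (eta n) *ᵥ y + x ⬝ᵥ (eta n) *ᵥ z := by
  rw [mulVec_add, dotProduct_add]

lemma md_smul_right (x : Fin n → ℝ) (c : ℝ) (y : Fin n → ℝ) :
    x ⬝ᵥ (eta n) *ᵥ (c • y) = c * (x ⬝ᵥ (eta n) *ᵥ y) := by
  rw [mulVec_smul, dotProduct_smul, smul_eq_mul]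

lemma md_add_left (x y z : Fin n → ℝ) :
    (x + y) ⬝ᵥ (eta n) *ᵥ z = x ⬝ᵥ (eta n) *ᵥ z + y ⬝ᵥ (eta n) *ᵥ z := by
  rw [add_dotProduct]

lemma md_smul_left (c : ℝ) (x y : Fin n → ℝ) :
    (c • x) ⬝ᵥ (eta n) *ᵥ y = c * (x ⬝ᵥ (eta n) *ᵥ y) := by
  rw [smul_dotProduct, smul_eq_mul]

lemma pnormsq (hu : u ⬝ᵥ (eta n) *ᵥ u = -1) (w : Fin n → ℝ) :
    (w + (u ⬝ᵥ (eta n) *ᵥ w) • u) ⬝ᵥ (eta n) *ᵥ (w + (u ⬝ᵥ (eta n) *ᵥ w) • u)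
      = w ⬝ᵥ (eta n) *ᵥ w + (u ⬝ᵥ (eta n) *ᵥ w) ^ 2 := by
  rw [md_add_right, md_smul_right, md_add_left, md_add_left, md_smul_left, md_smul_left,
    hu, md_comm w u]
  ring

lemma porth (hu : u ⬝ᵥ (eta n) *ᵥ u = -1) (w : Fin n → ℝ) :
    u ⬝ᵥ (eta n) *ᵥ (w + (u ⬝ᵥ (eta n) *ᵥ w) • u) = 0 := by
  rw [md_add_right, md_smul_right, hu]; ring

lemma vecNormSq_nonneg (hn : 0 < n) {u : Fin n → ℝ} (hu : u ⬝ᵥ (eta n) *ᵥ u = -1)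
    (w : Fin n → ℝ) : 0 ≤ vecNormSq u w := by
  have h := (orth_nonneg hn hu (porth hu w)).1
  rw [pnormsq hu w] at h
  rw [vecNormSq_eq]
  nlinarith [sq_nonneg (u ⬝ᵥ (eta n) *ᵥ w)]

lemma key_ineq {T q m c : ℝ} (hT : 0 < T) (hq : 0 < q) (hm : 0 < m)
    (h1 : m * T ≤ q) (h2 : m * q ≤ T) (hc2 : c ^ 2 = 1 + m ^ 2) (hc1 : 1 ≤ c) :
    (c * T - m * q) ^ 2 < T ^ 2 := by
  have h3 : 2 * (c - 1) ≤ m ^ 2 := by nlinarith [sq_nonneg (c - 1)]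
  have h4 : m * (m * T) ≤ m * q := mul_le_mul_of_nonneg_left h1 hm.le
  have h5 : 2 * (c - 1) * T ≤ m ^ 2 * T := mul_le_mul_of_nonneg_right h3 hT.le
  have hA : (c - 1) * T - m * q < 0 := by nlinarith [mul_pos hm hq]
  have hB : 0 < (c + 1) * T - m * q := by nlinarith
  nlinarith [mul_neg_of_neg_of_pos hA hB]


end StmtAux

open StmtAux

/-- A vector `v` is minimal with respect to a unit timelike `u` iff it is purely
spatial (`uᵀηv = 0`) or purely temporal (a scalar multiple of `u`) relative to `u`. -/
theorem stmt0 {n : ℕ} (hn : 2 ≤ n) (u : Fin n → ℝ)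
    (hu : u ⬝ᵥ (eta n).mulVec u = -1) (v : Fin n → ℝ) :
    IsMinimalVec u v ↔ (u ⬝ᵥ (eta n).mulVec v = 0 ∨ ∃ c : ℝ, v = c • u) := by
  classical
  have hn0 : 0 < n := by omega
  constructor
  · intro hmin
    obtain ⟨t, ht⟩ : ∃ t : ℝ, t = u ⬝ᵥ (eta n) *ᵥ v := ⟨_, rfl⟩
    by_cases htz : t = 0
    · exact Or.inl (by rw [← ht]; exact htz)
    obtain ⟨p, hp⟩ : ∃ p : Fin n → ℝ, p = v + t • u := ⟨_, rfl⟩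
    have hup : u ⬝ᵥ (eta n) *ᵥ p = 0 := by rw [hp, ht]; exact porth hu v
    have hpp : p ⬝ᵥ (eta n) *ᵥ p = v ⬝ᵥ (eta n) *ᵥ v + t ^ 2 := by
      rw [hp, ht]; exact pnormsq hu v
    by_cases hp0 : p = 0
    · refine Or.inr ⟨-t, ?_⟩
      have h0 : v + t • u = 0 := by rw [← hp]; exact hp0
      rw [neg_smul]
      exact eq_neg_of_add_eq_zero_left h0
    · exfalso
      have horth := orth_nonneg hn0 hu hup
      have hq2pos : 0 < p ⬝ᵥ (eta n) *ᵥ p :=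
        lt_of_le_of_ne horth.1 (fun h => hp0 (horth.2 h.symm))
      obtain ⟨q, hqdef⟩ : ∃ q : ℝ, q = Real.sqrt (p ⬝ᵥ (eta n) *ᵥ p) := ⟨_, rfl⟩
      have hq : 0 < q := hqdef ▸ Real.sqrt_pos.2 hq2pos
      have hq2 : q ^ 2 = p ⬝ᵥ (eta n) *ᵥ p := hqdef ▸ Real.sq_sqrt hq2pos.le
      obtain ⟨e, he⟩ : ∃ e : Fin n → ℝ, e = q⁻¹ • p := ⟨_, rfl⟩
      have hee : e ⬝ᵥ (eta n) *ᵥ e = 1 := by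
        rw [he, md_smul_left, md_smul_right, ← hq2]
        field_simp
      have hue : u ⬝ᵥ (eta n) *ᵥ e = 0 := by rw [he, md_smul_right, hup]; ring
      have hpu : p ⬝ᵥ (eta n) *ᵥ u = 0 := by rw [md_comm]; exact hup
      have hpv : p ⬝ᵥ (eta n) *ᵥ v = q ^ 2 := by
        have h1 : p ⬝ᵥ (eta n) *ᵥ p = p ⬝ᵥ (eta n) *ᵥ v := by
          nth_rewrite 2 [hp]
          rw [md_add_right, md_smul_right, hpu]; ring
        rw [← h1, hq2]
      have hev : e ⬝ᵥ (eta n) *ᵥ v = q := by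
        rw [he, md_smul_left, hpv]
        field_simp
      obtain ⟨m, hmdef⟩ : ∃ m : ℝ, m = min (q / |t|) (|t| / q) := ⟨_, rfl⟩
      have htabs : 0 < |t| := abs_pos.2 htz
      have hm : 0 < m := hmdef ▸ lt_min (div_pos hq htabs) (div_pos htabs hq)
      have hmT : m * |t| ≤ q := by
        rw [hmdef]
        calc min (q / |t|) (|t| / q) * |t| ≤ (q / |t|) * |t| :=
              mul_le_mul_of_nonneg_right (min_le_left _ _) htabs.le
          _ = q := div_mul_cancel₀ _ htabs.ne'
      have hmq : m * q ≤ |t| := by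
        rw [hmdef]
        calc min (q / |t|) (|t| / q) * q ≤ (|t| / q) * q :=
              mul_le_mul_of_nonneg_right (min_le_right _ _) hq.le
          _ = |t| := div_mul_cancel₀ _ hq.ne'
      obtain ⟨σ, hσdef⟩ : ∃ σ : ℝ, σ = if 0 < t then m else -m := ⟨_, rfl⟩
      have hσ2 : σ ^ 2 = m ^ 2 := by rw [hσdef]; split <;> ring
      obtain ⟨c, hcdef⟩ : ∃ c : ℝ, c = Real.sqrt (1 + σ ^ 2) := ⟨_, rfl⟩
      have hc2 : c ^ 2 = 1 + σ ^ 2 := by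
        rw [hcdef]; exact Real.sq_sqrt (by nlinarith [sq_nonneg σ])
      have hc1 : 1 ≤ c := by
        have h := Real.sqrt_le_sqrt (show (1:ℝ) ≤ 1 + σ ^ 2 by nlinarith [sq_nonneg σ])
        rwa [Real.sqrt_one, ← hcdef] at h
      have hL : IsLorentz (boost c σ u e) := boost_lorentz hc2 hu hee hue
      have ht' : u ⬝ᵥ (eta n) *ᵥ ((boost c σ u e) *ᵥ v) = c * t - σ * q := by
        rw [boost_mulVec, md_add_right, md_add_right, md_smul_right, md_smul_right,
          hev, hue, hu, ← ht]
        ring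
      have hkey : (c * t - σ * q) ^ 2 < t ^ 2 := by
        rcases lt_or_gt_of_ne htz with hneg | hpos
        · have hσ : σ = -m := by rw [hσdef, if_neg (not_lt.2 hneg.le)]
          have habs : |t| = -t := abs_of_neg hneg
          rw [habs] at hmT hmq
          have hk := key_ineq (by linarith : (0:ℝ) < -t) hq hm hmT hmq
            (by rw [hc2, hσ2]) hc1
          calc (c * t - σ * q) ^ 2 = (c * (-t) - m * q) ^ 2 := by rw [hσ]; ring
            _ < (-t) ^ 2 := hk
            _ = t ^ 2 := by ring
        · have hσ : σ = m := by rw [hσdef, if_pos hpos]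
          have habs : |t| = t := abs_of_pos hpos
          rw [habs] at hmT hmq
          have hk := key_ineq hpos hq hm hmT hmq (by rw [hc2, hσ2]) hc1
          rw [hσ]
          exact hk
      have hmono := hmin _ hL
      have hinv := lorentz_md hL v v
      have hlt : vecNormSq u ((boost c σ u e) *ᵥ v) < vecNormSq u v := by
        rw [vecNormSq_eq, vecNormSq_eq, hinv, ht', ← ht]
        linarith [hkey]
      have hsq := Real.sqrt_lt_sqrt (vecNormSq_nonneg hn0 hu _) hlt
      simp only [vecNorm, mulVec] at hmono hsq
      linarith
  · rintro (htz | ⟨cc, rfl⟩)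
    · intro Λ hL
      simp only [vecNorm]
      apply Real.sqrt_le_sqrt
      rw [vecNormSq_eq, vecNormSq_eq, lorentz_md hL, htz]
      nlinarith [sq_nonneg (u ⬝ᵥ (eta n) *ᵥ (Λ *ᵥ v))]
    · intro Λ hL
      simp only [vecNorm]
      apply Real.sqrt_le_sqrt
      rw [vecNormSq_eq, vecNormSq_eq, lorentz_md hL]
      have hww : (Λ *ᵥ u) ⬝ᵥ (eta n) *ᵥ (Λ *ᵥ u) = -1 := (lorentz_md hL u u).trans hu
      have hrcs : 1 ≤ (u ⬝ᵥ (eta n) *ᵥ (Λ *ᵥ u)) ^ 2 := by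
        have h3 := (orth_nonneg hn0 hu (porth hu (Λ *ᵥ u))).1
        rw [pnormsq hu (Λ *ᵥ u), hww] at h3
        linarith
      simp only [Matrix.mulVec_smul, dotProduct_smul, smul_dotProduct, smul_eq_mul]
      rw [hu]
      nlinarith [mul_nonneg (sq_nonneg cc) (sub_nonneg.2 hrcs)]

end
end

section
/- Let n ≥ 2 and v ∈ ℝⁿ. The Lorentz orbit of v contains a vector of minimal standard Euclidean norm — i.e., there exists Λ₀ ∈ O(1,n−1) such that ‖Λ₀v‖ ≤ ‖Λv‖ (standard Euclidean norm) for all Λ ∈ O(1,n−1) — if and only if v = 0 or vᵀηv ≠ 0, i.e., if and only if v is not a nonzero null vector. -/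
open Matrix

noncomputable section

/-- The standard Euclidean norm of a vector of `ℝⁿ`. -/
def euclNorm {n : ℕ} (v : Fin n → ℝ) : ℝ :=
  Real.sqrt (v ⬝ᵥ v)

/-! Write `⟪x, y⟫ = xᵀ η y`. Comparing coordinatewise, `|⟪x, x⟫| ≤ x ⬝ᵥ x`, with equality for a
multiple of a suitable basis vector. Minkowski reflections make the Lorentz group transitive on
every non-null level set of `⟪x, x⟫`, so the orbit of a non-null `v` contains a vector attaining
this lower bound. A nonzero null vector `w` is instead sent to `w / 2` by two reflections (passing
through `η w`), so the Euclidean norm has no minimum on its orbit. -/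

def minkowski (n : ℕ) : LinearMap.BilinForm ℝ (Fin n → ℝ) := Matrix.toBilin' (eta n)

section Minkowski

variable {n : ℕ}

lemma minkowski_apply (x y : Fin n → ℝ) : minkowski n x y = x ⬝ᵥ eta n *ᵥ y :=
  Matrix.toBilin'_apply' _ _ _

lemma eta_transpose : (eta n)ᵀ = eta n := diagonal_transpose _

lemma eta_mul_eta : eta n * eta n = 1 := by
  rw [eta, diagonal_mul_diagonal, ← diagonal_one]
  congr 1
  ext i
  split_ifs <;> norm_num

lemma minkowski_comm (x y : Fin n → ℝ) : minkowski n x y = minkowski n y x := by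
  rw [minkowski_apply, minkowski_apply, dotProduct_mulVec, ← mulVec_transpose, eta_transpose,
    dotProduct_comm]

lemma minkowski_eta_mulVec (x y : Fin n → ℝ) : minkowski n x (eta n *ᵥ y) = x ⬝ᵥ y := by
  rw [minkowski_apply, mulVec_mulVec, eta_mul_eta, one_mulVec]

lemma minkowski_eta_mulVec_self (x : Fin n → ℝ) :
    minkowski n (eta n *ᵥ x) (eta n *ᵥ x) = minkowski n x x := by
  rw [minkowski_eta_mulVec, dotProduct_comm, minkowski_apply]

lemma dotProduct_self_pos {ι : Type*} [Fintype ι] {x : ι → ℝ} (hx : x ≠ 0) : 0 < x ⬝ᵥ x :=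
  lt_of_le_of_ne (Finset.sum_nonneg fun i _ => mul_self_nonneg (x i))
    (Ne.symm (dotProduct_self_eq_zero.not.mpr hx))

lemma abs_minkowski_self_le (x : Fin n → ℝ) : |minkowski n x x| ≤ x ⬝ᵥ x := by
  simp only [minkowski_apply, eta, dotProduct, mulVec_diagonal]
  refine (Finset.abs_sum_le_sum_abs _ _).trans (Finset.sum_le_sum fun i _ => ?_)
  split_ifs <;> simp

lemma minkowski_single (i : Fin n) (t : ℝ) :
    minkowski n (Pi.single i t) (Pi.single i t) = (if i.val = 0 then -1 else 1) * (t * t) := by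
  simp only [minkowski_apply, eta, dotProduct, mulVec_diagonal]
  simp [Pi.single_apply]

lemma exists_minkowski_self_eq_and_dotProduct_self_eq (hn : 2 ≤ n) (c : ℝ) :
    ∃ w : Fin n → ℝ, minkowski n w w = c ∧ w ⬝ᵥ w = |c| := by
  rcases le_total c 0 with hc | hc
  · refine ⟨Pi.single ⟨0, by omega⟩ √(-c), ?_, ?_⟩
    · rw [minkowski_single]; simp [Real.mul_self_sqrt (neg_nonneg.mpr hc)]
    · simp [Real.mul_self_sqrt (neg_nonneg.mpr hc), abs_of_nonpos hc]
  · refine ⟨Pi.single ⟨1, by omega⟩ √c, ?_, ?_⟩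
    · rw [minkowski_single]; simp [Real.mul_self_sqrt hc]
    · simp [Real.mul_self_sqrt hc, abs_of_nonneg hc]

end Minkowski

section Lorentz

variable {n : ℕ}

lemma isLorentz_iff_minkowski {Λ : Matrix (Fin n) (Fin n) ℝ} :
    IsLorentz Λ ↔ ∀ x y, minkowski n (Λ *ᵥ x) (Λ *ᵥ y) = minkowski n x y := by
  have h (x y : Fin n → ℝ) :
      minkowski n (Λ *ᵥ x) (Λ *ᵥ y) = Matrix.toBilin' (Λᵀ * eta n * Λ) x y := by
    rw [minkowski_apply, Matrix.toBilin'_apply', ← mulVec_mulVec, ← mulVec_mulVec,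
      dotProduct_mulVec x, vecMul_transpose]
  simp only [h, IsLorentz]
  rw [← Matrix.toBilin'.injective.eq_iff, LinearMap.ext_iff₂]
  rfl

lemma IsLorentz.minkowski_mulVec {Λ : Matrix (Fin n) (Fin n) ℝ} (hΛ : IsLorentz Λ)
    (x y : Fin n → ℝ) : minkowski n (Λ *ᵥ x) (Λ *ᵥ y) = minkowski n x y :=
  isLorentz_iff_minkowski.mp hΛ x y

lemma isLorentz_one : IsLorentz (1 : Matrix (Fin n) (Fin n) ℝ) := by
  simp [IsLorentz]

lemma IsLorentz.mul {A C : Matrix (Fin n) (Fin n) ℝ} (hA : IsLorentz A) (hC : IsLorentz C) :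
    IsLorentz (A * C) :=
  isLorentz_iff_minkowski.mpr fun x y => by
    rw [← mulVec_mulVec, ← mulVec_mulVec, hA.minkowski_mulVec, hC.minkowski_mulVec]

lemma IsLorentz.mulVec_ne_zero {Λ : Matrix (Fin n) (Fin n) ℝ} (hΛ : IsLorentz Λ)
    {v : Fin n → ℝ} (hv : v ≠ 0) : Λ *ᵥ v ≠ 0 := by
  intro h
  have := hΛ.minkowski_mulVec v (eta n *ᵥ v)
  rw [h, map_zero, LinearMap.zero_apply, minkowski_eta_mulVec] at this
  exact hv (dotProduct_self_eq_zero.mp this.symm)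

def lorentzReflection (u : Fin n → ℝ) : Matrix (Fin n) (Fin n) ℝ :=
  1 - (2 / minkowski n u u) • vecMulVec u (eta n *ᵥ u)

lemma lorentzReflection_mulVec (u x : Fin n → ℝ) :
    lorentzReflection u *ᵥ x = x - (2 / minkowski n u u * minkowski n u x) • u := by
  rw [lorentzReflection, sub_mulVec, one_mulVec, smul_mulVec, vecMulVec_mulVec, op_smul_eq_smul,
    smul_smul, dotProduct_comm, ← minkowski_apply, minkowski_comm x u]

lemma isLorentz_lorentzReflection {u : Fin n → ℝ} (hu : minkowski n u u ≠ 0) :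
    IsLorentz (lorentzReflection u) := by
  refine isLorentz_iff_minkowski.mpr fun x y => ?_
  simp only [lorentzReflection_mulVec, map_sub, map_smul, LinearMap.sub_apply,
    LinearMap.smul_apply, smul_eq_mul, minkowski_comm x u]
  field_simp
  ring

lemma lorentzReflection_sub_mulVec {a b : Fin n → ℝ}
    (hab : minkowski n a a = minkowski n b b) (h : minkowski n (a - b) (a - b) ≠ 0) :
    lorentzReflection (a - b) *ᵥ a = b := by
  have key : minkowski n (a - b) (a - b) = 2 * minkowski n (a - b) a := by
    simp only [map_sub, LinearMap.sub_apply, minkowski_comm b a] at h ⊢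
    linarith
  have hu : minkowski n (a - b) a ≠ 0 := fun h0 => h (by rw [key, h0, mul_zero])
  rw [lorentzReflection_mulVec, key, div_mul_eq_mul_div, mul_div_mul_left _ _ two_ne_zero,
    div_self hu, one_smul, sub_sub_cancel]

lemma exists_isLorentz_mulVec_eq_of_minkowski_sub_ne_zero {a b : Fin n → ℝ}
    (hab : minkowski n a a = minkowski n b b) (h : minkowski n (a - b) (a - b) ≠ 0) :
    ∃ Λ, IsLorentz Λ ∧ Λ *ᵥ a = b :=
  ⟨lorentzReflection (a - b), isLorentz_lorentzReflection h, lorentzReflection_sub_mulVec hab h⟩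

lemma exists_isLorentz_mulVec_eq_trans {a b c : Fin n → ℝ}
    (hab : ∃ Λ, IsLorentz Λ ∧ Λ *ᵥ a = b) (hbc : ∃ Λ, IsLorentz Λ ∧ Λ *ᵥ b = c) :
    ∃ Λ, IsLorentz Λ ∧ Λ *ᵥ a = c := by
  obtain ⟨Λ₁, hΛ₁, rfl⟩ := hab
  obtain ⟨Λ₂, hΛ₂, rfl⟩ := hbc
  exact ⟨Λ₂ * Λ₁, hΛ₂.mul hΛ₁, (mulVec_mulVec _ _ _).symm⟩

theorem exists_isLorentz_mulVec_eq {v w : Fin n → ℝ}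
    (hvw : minkowski n v v = minkowski n w w) (hv : minkowski n v v ≠ 0) :
    ∃ Λ, IsLorentz Λ ∧ Λ *ᵥ v = w := by
  by_cases hsub : minkowski n (v - w) (v - w) = 0
  · -- by the parallelogram law `v + w` is then not null, so we can pass through `-w`
    have hadd : minkowski n (v - -w) (v - -w) ≠ 0 := by
      simp only [map_sub, map_neg, LinearMap.sub_apply, LinearMap.neg_apply,
        minkowski_comm w v] at hsub ⊢
      intro h; apply hv; linarith
    have hneg : minkowski n (-w - w) (-w - w) ≠ 0 := by
      simp only [map_sub, map_neg, LinearMap.sub_apply, LinearMap.neg_apply]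
      intro h; apply hv; linarith
    exact exists_isLorentz_mulVec_eq_trans
      (exists_isLorentz_mulVec_eq_of_minkowski_sub_ne_zero (by simpa using hvw) hadd)
      (exists_isLorentz_mulVec_eq_of_minkowski_sub_ne_zero (by simp) hneg)
  · exact exists_isLorentz_mulVec_eq_of_minkowski_sub_ne_zero hvw hsub

theorem exists_isLorentz_mulVec_eq_smul {w : Fin n → ℝ} (hw : w ≠ 0)
    (hnull : minkowski n w w = 0) {c : ℝ} (hc : c ≠ 0) :
    ∃ Λ, IsLorentz Λ ∧ Λ *ᵥ w = c • w := by
  have hpos := dotProduct_self_pos hw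
  -- both `w ↦ η w` and `η w ↦ c w` are single reflections
  refine exists_isLorentz_mulVec_eq_trans (b := eta n *ᵥ w) ?_ ?_
  · refine exists_isLorentz_mulVec_eq_of_minkowski_sub_ne_zero
      (minkowski_eta_mulVec_self w).symm ?_
    simp only [map_sub, LinearMap.sub_apply]
    rw [minkowski_eta_mulVec_self, minkowski_comm (eta n *ᵥ w) w, minkowski_eta_mulVec, hnull]
    linarith
  · refine exists_isLorentz_mulVec_eq_of_minkowski_sub_ne_zero
      (by simp [minkowski_eta_mulVec_self, hnull]) ?_
    simp only [map_sub, map_smul, LinearMap.sub_apply, LinearMap.smul_apply, smul_eq_mul]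
    rw [minkowski_eta_mulVec_self, minkowski_comm (eta n *ᵥ w) w, minkowski_eta_mulVec, hnull]
    have : c * (w ⬝ᵥ w) ≠ 0 := mul_ne_zero hc hpos.ne'
    intro h; apply this; linarith

end Lorentz

section Orbit

variable {n : ℕ}

lemma euclNorm_smul (c : ℝ) (w : Fin n → ℝ) : euclNorm (c • w) = |c| * euclNorm w := by
  rw [euclNorm, euclNorm, smul_dotProduct, dotProduct_smul, smul_eq_mul, smul_eq_mul,
    ← mul_assoc, Real.sqrt_mul (mul_self_nonneg c), Real.sqrt_mul_self_eq_abs]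

lemma euclNorm_pos {w : Fin n → ℝ} (hw : w ≠ 0) : 0 < euclNorm w :=
  Real.sqrt_pos.mpr (dotProduct_self_pos hw)

def HasMinimalVectorInOrbit (v : Fin n → ℝ) : Prop :=
  ∃ Λ₀, IsLorentz Λ₀ ∧ ∀ Λ, IsLorentz Λ → euclNorm (Λ₀ *ᵥ v) ≤ euclNorm (Λ *ᵥ v)

lemma hasMinimalVectorInOrbit_zero : HasMinimalVectorInOrbit (0 : Fin n → ℝ) :=
  ⟨1, isLorentz_one, fun Λ _ => by simp⟩

theorem hasMinimalVectorInOrbit_of_minkowski_ne_zero (hn : 2 ≤ n) {v : Fin n → ℝ}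
    (hv : minkowski n v v ≠ 0) : HasMinimalVectorInOrbit v := by
  obtain ⟨w, hwv, hww⟩ := exists_minkowski_self_eq_and_dotProduct_self_eq hn (minkowski n v v)
  obtain ⟨Λ₀, hΛ₀, rfl⟩ := exists_isLorentz_mulVec_eq hwv.symm hv
  refine ⟨Λ₀, hΛ₀, fun Λ hΛ => Real.sqrt_le_sqrt ?_⟩
  calc (Λ₀ *ᵥ v) ⬝ᵥ (Λ₀ *ᵥ v) = |minkowski n (Λ *ᵥ v) (Λ *ᵥ v)| := by
        rw [hww, hΛ.minkowski_mulVec]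
    _ ≤ (Λ *ᵥ v) ⬝ᵥ (Λ *ᵥ v) := abs_minkowski_self_le _

theorem not_hasMinimalVectorInOrbit_of_null {v : Fin n → ℝ} (hv : v ≠ 0)
    (hnull : minkowski n v v = 0) : ¬ HasMinimalVectorInOrbit v := by
  rintro ⟨Λ₀, hΛ₀, hmin⟩
  have hw : Λ₀ *ᵥ v ≠ 0 := hΛ₀.mulVec_ne_zero hv
  obtain ⟨M, hM, hMw⟩ := exists_isLorentz_mulVec_eq_smul hw
    (by rw [hΛ₀.minkowski_mulVec, hnull]) (one_half_pos (α := ℝ)).ne'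
  have hle := hmin (M * Λ₀) (hM.mul hΛ₀)
  rw [← mulVec_mulVec, hMw, euclNorm_smul, abs_of_pos one_half_pos] at hle
  linarith [euclNorm_pos hw]

end Orbit

/-- Alignment theorem for vectors: the Lorentz orbit of `v` contains a vector of
minimal standard Euclidean norm iff `v = 0` or `v` is not null (`vᵀηv ≠ 0`). -/
theorem stmt1 {n : ℕ} (hn : 2 ≤ n) (v : Fin n → ℝ) :
    (∃ Λ₀ : Matrix (Fin n) (Fin n) ℝ, IsLorentz Λ₀ ∧
      ∀ Λ : Matrix (Fin n) (Fin n) ℝ, IsLorentz Λ →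
        euclNorm (Λ₀.mulVec v) ≤ euclNorm (Λ.mulVec v)) ↔
      (v = 0 ∨ v ⬝ᵥ (eta n).mulVec v ≠ 0) := by
  rw [← minkowski_apply]
  refine ⟨fun hmin => ?_, ?_⟩
  · by_contra! h
    exact not_hasMinimalVectorInOrbit_of_null h.1 h.2 hmin
  · rintro (rfl | hv)
    · exact hasMinimalVectorInOrbit_zero
    · exact hasMinimalVectorInOrbit_of_minkowski_ne_zero hn hv

end
end
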